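/- arXiv:0705.4314 — 2 statements merged into one kernel-verified Lean document; each statement's English description precedes it below -/
import Mathlib

section
/- Every symplectic 2n×2n real matrix Υ can be written as a finite product of the following generator matrices (each acting on at most two modes): squeezers S_i(a) with a ≠ 0, Fourier transforms F_i, two-mode QND interactions Q^X_{ij}(g) and Q^P_{ij}(g), single-mode phase gates P^X_i(g) and P^P_i(g), and mode swaps σ_{ij}. In other words, these one- and two-mode gates generate the symplectic group Sp(2n, ℝ). -/
open Matrix BigOperators

noncomputable section

/-- The symplectic product on `ℝ^{2n}`, where a vector `u = (p|x)` has momentum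
coordinates `u (Sum.inl i) = p_i` and position coordinates `u (Sum.inr i) = x_i`:
`u ⊙ v = p·x' − x·p'`. -/
def symp {n : ℕ} (u v : Fin n ⊕ Fin n → ℝ) : ℝ :=
  ∑ i : Fin n, (u (Sum.inl i) * v (Sum.inr i) - u (Sum.inr i) * v (Sum.inl i))

/-- The standard symplectic form matrix `J = [[0, I], [−I, 0]]`. -/
def J (n : ℕ) : Matrix (Fin n ⊕ Fin n) (Fin n ⊕ Fin n) ℝ :=
  Matrix.fromBlocks 0 1 (-1) 0

/-- `Υ` is symplectic: `Υᵀ J Υ = J`. -/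
def IsSymplectic {n : ℕ} (Υ : Matrix (Fin n ⊕ Fin n) (Fin n ⊕ Fin n) ℝ) : Prop :=
  Υᵀ * J n * Υ = J n

/-- Squeezer `S_i(a)`: `x_i ↦ a x_i`, `p_i ↦ p_i / a`, all other coordinates fixed. -/
def squeezer (n : ℕ) (i : Fin n) (a : ℝ) :
    Matrix (Fin n ⊕ Fin n) (Fin n ⊕ Fin n) ℝ := fun r c =>
  if r = Sum.inl i ∧ c = Sum.inl i then a⁻¹
  else if r = Sum.inr i ∧ c = Sum.inr i then a
  else if r = c then 1 else 0

/-- Fourier transform `F_i`: the new position coordinate is minus the old momentum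
coordinate (`x_i ↦ −p_i`) and the new momentum coordinate is the old position
coordinate (`p_i ↦ x_i`); all other coordinates fixed. -/
def fourierGate (n : ℕ) (i : Fin n) :
    Matrix (Fin n ⊕ Fin n) (Fin n ⊕ Fin n) ℝ := fun r c =>
  if r = Sum.inl i then (if c = Sum.inr i then 1 else 0)
  else if r = Sum.inr i then (if c = Sum.inl i then -1 else 0)
  else if r = c then 1 else 0

/-- Position-quadrature QND interaction `Q^X_{ij}(g)`:
`x_j ↦ x_j + g x_i`, `p_i ↦ p_i − g p_j`, all other coordinates fixed. -/
def qndX (n : ℕ) (i j : Fin n) (g : ℝ) :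
    Matrix (Fin n ⊕ Fin n) (Fin n ⊕ Fin n) ℝ := fun r c =>
  if r = Sum.inr j ∧ c = Sum.inr i then g
  else if r = Sum.inl i ∧ c = Sum.inl j then -g
  else if r = c then 1 else 0

/-- Momentum-quadrature QND interaction `Q^P_{ij}(g)`:
`x_i ↦ x_i − g x_j`, `p_j ↦ p_j + g p_i`, all other coordinates fixed. -/
def qndP (n : ℕ) (i j : Fin n) (g : ℝ) :
    Matrix (Fin n ⊕ Fin n) (Fin n ⊕ Fin n) ℝ := fun r c =>
  if r = Sum.inr i ∧ c = Sum.inr j then -g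
  else if r = Sum.inl j ∧ c = Sum.inl i then g
  else if r = c then 1 else 0

/-- Position-quadrature phase gate `P^X_i(g)`: `p_i ↦ p_i + g x_i`, all other
coordinates fixed. -/
def phaseX (n : ℕ) (i : Fin n) (g : ℝ) :
    Matrix (Fin n ⊕ Fin n) (Fin n ⊕ Fin n) ℝ := fun r c =>
  if r = Sum.inl i ∧ c = Sum.inr i then g
  else if r = c then 1 else 0

/-- Momentum-quadrature phase gate `P^P_i(g)`: `x_i ↦ x_i + g p_i`, all other
coordinates fixed. -/
def phaseP (n : ℕ) (i : Fin n) (g : ℝ) :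
    Matrix (Fin n ⊕ Fin n) (Fin n ⊕ Fin n) ℝ := fun r c =>
  if r = Sum.inr i ∧ c = Sum.inl i then g
  else if r = c then 1 else 0

/-- Mode swap `σ_{ij}`: exchanges `(p_i, x_i)` with `(p_j, x_j)`. -/
def modeSwap (n : ℕ) (i j : Fin n) :
    Matrix (Fin n ⊕ Fin n) (Fin n ⊕ Fin n) ℝ := fun r c =>
  if c = Sum.map (Equiv.swap i j) (Equiv.swap i j) r then 1 else 0

/-- `M` is one of the elementary linear-optics generator matrices: a squeezer
`S_i(a)` with `a ≠ 0`, a Fourier transform `F_i`, a QND interaction `Q^X_{ij}(g)`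
or `Q^P_{ij}(g)` with `i ≠ j`, a phase gate `P^X_i(g)` or `P^P_i(g)`, or a mode
swap `σ_{ij}`. -/
def IsGenerator {n : ℕ} (M : Matrix (Fin n ⊕ Fin n) (Fin n ⊕ Fin n) ℝ) : Prop :=
  (∃ (i : Fin n) (a : ℝ), a ≠ 0 ∧ M = squeezer n i a) ∨
  (∃ i : Fin n, M = fourierGate n i) ∨
  (∃ (i j : Fin n) (g : ℝ), i ≠ j ∧ M = qndX n i j g) ∨
  (∃ (i j : Fin n) (g : ℝ), i ≠ j ∧ M = qndP n i j g) ∨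
  (∃ (i : Fin n) (g : ℝ), M = phaseX n i g) ∨
  (∃ (i : Fin n) (g : ℝ), M = phaseP n i g) ∨
  (∃ i j : Fin n, M = modeSwap n i j)

/-!
Write `Υ = [[A, B], [C, D]]` in `(p | x)` blocks. The phase gates are the shears
`[[1, g Eᵢᵢ], [0, 1]]` and `[[1, 0], [g Eᵢᵢ, 1]]`, while squeezers and QND gates are the point
transformations `diag(P⁻ᵀ, P)` for `P` an invertible diagonal matrix or a transvection; these `P`
generate `GL(n, ℝ)`, so every point transformation is a product of gates. Conjugating a phase gate
by a QND gate yields the shear by `g (Eᵢᵢ + Eᵢⱼ + Eⱼᵢ + Eⱼⱼ)`, hence every shear by a symmetric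
matrix is a product of gates.

If `A` is invertible, the symplectic relations make `C A⁻¹` and `A⁻¹ B` symmetric and give
`Υ = [[1, 0], [C A⁻¹, 1]] · diag(A, A⁻ᵀ) · [[1, A⁻¹ B], [0, 1]]`. In general, a preliminary shear
`[[1, S], [0, 1]]` replaces `A` by `A + S C`, and taking for `S` the orthogonal projection onto
`(range A)ᗮ` makes it invertible: `Aᵀ C` is symmetric and `ker A ∩ ker C = 0`.
-/

namespace LinearOptics

section Blocks

variable {l R : Type*} [DecidableEq l] [CommRing R]

def upperShear (B : Matrix l l R) : Matrix (l ⊕ l) (l ⊕ l) R := fromBlocks 1 B 0 1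

def lowerShear (B : Matrix l l R) : Matrix (l ⊕ l) (l ⊕ l) R := fromBlocks 1 0 B 1

lemma upperShear_zero : upperShear (0 : Matrix l l R) = 1 := by simp [upperShear]

lemma lowerShear_zero : lowerShear (0 : Matrix l l R) = 1 := by simp [lowerShear]

lemma transpose_transvection (i j : l) (c : R) : (transvection i j c)ᵀ = transvection j i c := by
  simp [transvection, transpose_single]

variable [Fintype l]

lemma upperShear_add (B B' : Matrix l l R) :
    upperShear (B + B') = upperShear B * upperShear B' := by
  simp [upperShear, fromBlocks_multiply, add_comm]

lemma lowerShear_add (B B' : Matrix l l R) :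
    lowerShear (B + B') = lowerShear B * lowerShear B' := by
  simp [lowerShear, fromBlocks_multiply, add_comm]

/-- The symplectic lift `x ↦ P x`, `p ↦ P⁻ᵀ p` of a linear change of the position coordinates. -/
def pointTransform : Matrix l l R →* Matrix (l ⊕ l) (l ⊕ l) R where
  toFun P := fromBlocks (Pᵀ)⁻¹ 0 0 P
  map_one' := by simp
  map_mul' P Q := by simp [fromBlocks_multiply, Matrix.mul_inv_rev]

lemma pointTransform_eq_fromBlocks {P Q : Matrix l l R} (h : Pᵀ * Q = 1) :
    pointTransform P = fromBlocks Q 0 0 P := by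
  simp [pointTransform, inv_eq_right_inv h]

lemma pointTransform_mul_upperShear_mul {P Q : Matrix l l R} (h : P * Q = 1) (B : Matrix l l R) :
    pointTransform Q * upperShear B * pointTransform P = upperShear (Pᵀ * B * P) := by
  have hQ : Q⁻¹ = P := inv_eq_left_inv h
  have hP : P⁻¹ = Q := inv_eq_right_inv h
  have h' : Q * P = 1 := mul_eq_one_comm.mp h
  simp [pointTransform, upperShear, fromBlocks_multiply, ← transpose_nonsing_inv, hP, hQ, h',
    ← transpose_mul, Matrix.mul_assoc]

lemma pointTransform_mul_lowerShear_mul {P Q : Matrix l l R} (h : P * Q = 1) (B : Matrix l l R) :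
    pointTransform Q * lowerShear B * pointTransform P = lowerShear (Q * B * Qᵀ) := by
  have hQ : Q⁻¹ = P := inv_eq_left_inv h
  have hP : P⁻¹ = Q := inv_eq_right_inv h
  have h' : Q * P = 1 := mul_eq_one_comm.mp h
  simp [pointTransform, lowerShear, fromBlocks_multiply, ← transpose_nonsing_inv, hP, hQ, h',
    ← transpose_mul, Matrix.mul_assoc]

lemma isSymm_mul_inv {A C : Matrix l l R} (hA : IsUnit A.det) (h : Aᵀ * C = Cᵀ * A) :
    (C * A⁻¹).IsSymm := by
  have hAT : IsUnit Aᵀ.det := by rwa [det_transpose]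
  rw [IsSymm, transpose_mul, transpose_nonsing_inv]
  calc (Aᵀ)⁻¹ * Cᵀ = (Aᵀ)⁻¹ * (Cᵀ * A) * A⁻¹ := by
        rw [Matrix.mul_assoc, Matrix.mul_nonsing_inv_cancel_right _ _ hA]
    _ = C * A⁻¹ := by rw [← h, Matrix.nonsing_inv_mul_cancel_left _ _ hAT]

lemma isSymm_inv_mul {A B : Matrix l l R} (hA : IsUnit A.det) (h : A * Bᵀ = B * Aᵀ) :
    (A⁻¹ * B).IsSymm := by
  have hAT : IsUnit Aᵀ.det := by rwa [det_transpose]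
  have hsymm := isSymm_mul_inv (C := Bᵀ) hAT (by rw [transpose_transpose, transpose_transpose, h])
  simpa [transpose_nonsing_inv] using hsymm.transpose

lemma fromBlocks_eq_lowerShear_mul_pointTransform_mul_upperShear {A B C D : Matrix l l R}
    (hA : IsUnit A.det) (hAC : Aᵀ * C = Cᵀ * A) (hAD : Aᵀ * D - Cᵀ * B = 1) :
    fromBlocks A B C D =
      lowerShear (C * A⁻¹) * pointTransform (Aᵀ)⁻¹ * upperShear (A⁻¹ * B) := by
  have hAT : IsUnit Aᵀ.det := by rwa [det_transpose]
  have hD : D = C * A⁻¹ * B + (Aᵀ)⁻¹ := by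
    rw [← (isSymm_mul_inv hA hAC).eq, transpose_mul, transpose_nonsing_inv, Matrix.mul_assoc,
      ← mul_add_one, ← sub_eq_iff_eq_add'.1 hAD, Matrix.nonsing_inv_mul_cancel_left _ _ hAT]
  simp [lowerShear, pointTransform, upperShear, fromBlocks_multiply, transpose_nonsing_inv,
    Matrix.nonsing_inv_nonsing_inv _ hA, Matrix.mul_nonsing_inv_cancel_left _ _ hA,
    Matrix.nonsing_inv_mul_cancel_right _ _ hA, hD, Matrix.mul_assoc]

lemma transvection_transpose_mul_single_mul_transvection (i j : l) (g : R) :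
    (transvection i j 1)ᵀ * single i i g * transvection i j 1 =
      single i i g + single i j g + single j i g + single j j g := by
  simp only [transvection, transpose_add, transpose_one, transpose_single, Matrix.add_mul,
    Matrix.mul_add, one_mul, mul_one, single_mul_single_same]
  abel

lemma upperShear_mem_symplecticGroup {S : Matrix l l R} (hS : S.IsSymm) :
    upperShear S ∈ symplecticGroup l R := by
  simp [upperShear, SymplecticGroup.fromBlocks_mem_iff, hS.eq]

end Blocks

theorem _root_.Matrix.IsSymm.induction {l K : Type*} [Fintype l] [DecidableEq l] [Field K]
    [NeZero (2 : K)] {p : Matrix l l K → Prop} (hzero : p 0)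
    (hadd : ∀ A B, p A → p B → p (A + B)) (hdiag : ∀ i g, p (single i i g))
    (hpair : ∀ i j g, i ≠ j → p ((transvection i j 1)ᵀ * single i i g * transvection i j 1))
    {S : Matrix l l K} (hS : S.IsSymm) : p S := by
  have hsym : ∀ i j g, p (single i j g + single j i g) := by
    intro i j g
    rcases eq_or_ne i j with rfl | hij
    · rw [← single_add]
      exact hdiag i _
    · convert hadd _ _ (hadd _ _ (hpair i j g hij) (hdiag i (-g))) (hdiag j (-g)) using 1
      rw [transvection_transpose_mul_single_mul_transvection, ← single_neg, ← single_neg]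
      abel
  set M := (2⁻¹ : K) • S
  have hSM : S = M + Mᵀ := by
    rw [transpose_smul, hS.eq, ← add_smul, ← two_mul, mul_inv_cancel₀ two_ne_zero, one_smul]
  rw [hSM, matrix_eq_sum_single M, transpose_sum, ← Finset.sum_add_distrib]
  refine Finset.sum_induction _ p hadd hzero fun i _ => ?_
  rw [transpose_sum, ← Finset.sum_add_distrib]
  exact Finset.sum_induction _ p hadd hzero fun j _ => transpose_single i j (M i j) ▸ hsym i j _

section Regularization

variable {l : Type*} [Fintype l] [DecidableEq l]

lemma exists_isSymm_ker_eq_range (A : Matrix l l ℝ) :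
    ∃ S : Matrix l l ℝ, S.IsSymm ∧ ∀ y, S *ᵥ y = 0 ↔ ∃ z, A *ᵥ z = y := by
  set W := LinearMap.range (toEuclideanLin A)
  obtain ⟨S, hS⟩ := toEuclideanLin.surjective Wᗮ.starProjection.toLinearMap
  refine ⟨S, ?_, fun y => ?_⟩
  · have h : S.IsHermitian := by
      rw [← isSymmetric_toEuclideanLin_iff, hS]
      exact Wᗮ.starProjection_isSymmetric
    simpa [IsHermitian, IsSymm, conjTranspose_eq_transpose_of_trivial] using h
  · calc S *ᵥ y = 0 ↔ toEuclideanLin S (WithLp.toLp 2 y) = 0 := by simp [toLpLin_apply]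
      _ ↔ WithLp.toLp 2 y ∈ Wᗮᗮ := by
            rw [hS]; exact Wᗮ.starProjection_apply_eq_zero_iff
      _ ↔ ∃ z, A *ᵥ z = y := by
            rw [W.orthogonal_orthogonal, LinearMap.mem_range]
            exact ⟨fun ⟨z, hz⟩ => ⟨z.ofLp, by simpa [toLpLin_apply] using congrArg WithLp.ofLp hz⟩,
              fun ⟨z, hz⟩ => ⟨WithLp.toLp 2 z, by simp [toLpLin_apply, hz]⟩⟩

lemma exists_isSymm_isUnit_det_add_mul {A C : Matrix l l ℝ} (hAC : Aᵀ * C = Cᵀ * A)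
    (hker : ∀ x, A *ᵥ x = 0 → C *ᵥ x = 0 → x = 0) :
    ∃ S : Matrix l l ℝ, S.IsSymm ∧ IsUnit (A + S * C).det := by
  obtain ⟨S, hS, hkerS⟩ := exists_isSymm_ker_eq_range A
  refine ⟨S, hS, ?_⟩
  rw [isUnit_iff_ne_zero, Ne, ← exists_mulVec_eq_zero_iff]
  rintro ⟨x, hx0, hx⟩
  rw [add_mulVec, ← mulVec_mulVec] at hx
  have hAx : A *ᵥ x = 0 := by
    refine dotProduct_self_eq_zero.1 ?_
    calc (A *ᵥ x) ⬝ᵥ (A *ᵥ x) = -((A *ᵥ x) ⬝ᵥ (S *ᵥ (C *ᵥ x))) := by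
          rw [← dotProduct_neg, ← eq_neg_of_add_eq_zero_left hx]
      _ = -((S *ᵥ (A *ᵥ x)) ⬝ᵥ (C *ᵥ x)) := by
          rw [dotProduct_mulVec, ← vecMul_transpose S, hS.eq]
      _ = 0 := by rw [(hkerS _).2 ⟨x, rfl⟩, zero_dotProduct, neg_zero]
  have hCx : C *ᵥ x = 0 := by
    obtain ⟨z, hz⟩ := (hkerS _).1 (by rwa [hAx, zero_add] at hx)
    refine dotProduct_self_eq_zero.1 ?_
    calc (C *ᵥ x) ⬝ᵥ (C *ᵥ x) = (C *ᵥ x) ⬝ᵥ (A *ᵥ z) := by rw [hz]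
      _ = ((Aᵀ * C) *ᵥ x) ⬝ᵥ z := by rw [dotProduct_mulVec, ← mulVec_transpose, mulVec_mulVec]
      _ = (Cᵀ *ᵥ (A *ᵥ x)) ⬝ᵥ z := by rw [hAC, mulVec_mulVec]
      _ = 0 := by rw [hAx, mulVec_zero, zero_dotProduct]
  exact hx0 (hker x hAx hCx)

end Regularization

lemma isSymplectic_iff_mem_symplecticGroup {n : ℕ}
    {Υ : Matrix (Fin n ⊕ Fin n) (Fin n ⊕ Fin n) ℝ} :
    IsSymplectic Υ ↔ Υ ∈ symplecticGroup (Fin n) ℝ := by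
  have hJ : J n = -Matrix.J (Fin n) ℝ := by simp [_root_.J, Matrix.J, fromBlocks_neg]
  rw [IsSymplectic, SymplecticGroup.mem_iff', hJ, Matrix.mul_neg, Matrix.neg_mul, neg_inj]

section Circuits

variable {n : ℕ}

def circuits (n : ℕ) : Submonoid (Matrix (Fin n ⊕ Fin n) (Fin n ⊕ Fin n) ℝ) :=
  Submonoid.closure {M | IsGenerator M}

lemma squeezer_mem (i : Fin n) {a : ℝ} (ha : a ≠ 0) : squeezer n i a ∈ circuits n :=
  Submonoid.subset_closure (Or.inl ⟨i, a, ha, rfl⟩)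

lemma qndX_mem {i j : Fin n} (hij : i ≠ j) (g : ℝ) : qndX n i j g ∈ circuits n :=
  Submonoid.subset_closure (Or.inr <| Or.inr <| Or.inl ⟨i, j, g, hij, rfl⟩)

lemma phaseX_mem (i : Fin n) (g : ℝ) : phaseX n i g ∈ circuits n :=
  Submonoid.subset_closure (Or.inr <| Or.inr <| Or.inr <| Or.inr <| Or.inl ⟨i, g, rfl⟩)

lemma phaseP_mem (i : Fin n) (g : ℝ) : phaseP n i g ∈ circuits n :=
  Submonoid.subset_closure (Or.inr <| Or.inr <| Or.inr <| Or.inr <| Or.inr <| Or.inl ⟨i, g, rfl⟩)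

lemma phaseX_eq_upperShear (i : Fin n) (g : ℝ) : phaseX n i g = upperShear (single i i g) := by
  ext (r | r) (c | c) <;>
  simp only [phaseX, upperShear, single, fromBlocks_apply₁₁, fromBlocks_apply₁₂,
    fromBlocks_apply₂₁, fromBlocks_apply₂₂, Sum.inl.injEq, Sum.inr.injEq, reduceCtorEq,
    and_false, false_and, and_self, ↓reduceIte, one_apply, of_apply, Matrix.zero_apply]
  aesop

lemma phaseP_eq_lowerShear (i : Fin n) (g : ℝ) : phaseP n i g = lowerShear (single i i g) := by
  ext (r | r) (c | c) <;>
  simp only [phaseP, lowerShear, single, fromBlocks_apply₁₁, fromBlocks_apply₁₂,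
    fromBlocks_apply₂₁, fromBlocks_apply₂₂, Sum.inl.injEq, Sum.inr.injEq, reduceCtorEq,
    and_false, false_and, and_self, ↓reduceIte, one_apply, of_apply, Matrix.zero_apply]
  aesop

lemma squeezer_eq_fromBlocks (i : Fin n) (a : ℝ) :
    squeezer n i a =
      fromBlocks (diagonal (Pi.mulSingle i a⁻¹)) 0 0 (diagonal (Pi.mulSingle i a)) := by
  ext (r | r) (c | c) <;>
  simp only [squeezer, diagonal, Pi.mulSingle, Function.update, eq_rec_constant, Pi.one_apply,
    dite_eq_ite, fromBlocks_apply₁₁, fromBlocks_apply₁₂, fromBlocks_apply₂₁,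
    fromBlocks_apply₂₂, Sum.inl.injEq, Sum.inr.injEq, reduceCtorEq, and_false, false_and, and_self,
    ↓reduceIte, of_apply, Matrix.zero_apply] <;>
  aesop

lemma qndX_eq_fromBlocks {i j : Fin n} (hij : i ≠ j) (g : ℝ) :
    qndX n i j g = fromBlocks (transvection i j (-g)) 0 0 (transvection j i g) := by
  ext (r | r) (c | c) <;>
  simp only [qndX, transvection, single, Matrix.add_apply, fromBlocks_apply₁₁,
    fromBlocks_apply₁₂, fromBlocks_apply₂₁, fromBlocks_apply₂₂, Sum.inl.injEq, Sum.inr.injEq,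
    reduceCtorEq, and_false, false_and, and_self, ↓reduceIte, one_apply, of_apply,
    Matrix.zero_apply] <;>
  aesop

lemma pointTransform_transvection_mem {i j : Fin n} (hij : i ≠ j) (c : ℝ) :
    pointTransform (transvection i j c) ∈ circuits n := by
  have h : (transvection i j c)ᵀ * transvection j i (-c) = 1 := by
    rw [transpose_transvection, transvection_mul_transvection_same _ _ hij.symm, add_neg_cancel,
      transvection_zero]
  rw [pointTransform_eq_fromBlocks h, ← qndX_eq_fromBlocks hij.symm]
  exact qndX_mem hij.symm c

lemma pointTransform_diagonal_mem {d : Fin n → ℝ} (hd : ∀ i, d i ≠ 0) :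
    pointTransform (diagonal d) ∈ circuits n := by
  let T := (circuits n).comap (pointTransform.comp (diagonalRingHom (Fin n) ℝ).toMonoidHom)
  have hsingle (i : Fin n) : Pi.mulSingle i (d i) ∈ T := by
    have h : (diagonal (Pi.mulSingle i (d i)))ᵀ * diagonal (Pi.mulSingle i (d i)⁻¹) = 1 := by
      rw [diagonal_transpose, diagonal_mul_diagonal, ← Pi.mul_def, ← Pi.mulSingle_mul,
        mul_inv_cancel₀ (hd i), Pi.mulSingle_one, diagonal_one']
    show pointTransform (diagonal _) ∈ circuits n
    rw [pointTransform_eq_fromBlocks h, ← squeezer_eq_fromBlocks]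
    exact squeezer_mem i (hd i)
  have h := T.prod_mem (t := Finset.univ) fun i _ => hsingle i
  rwa [Finset.univ_prod_mulSingle] at h

lemma pointTransform_mem {P : Matrix (Fin n) (Fin n) ℝ} (hP : P.det ≠ 0) :
    pointTransform P ∈ circuits n :=
  diagonal_transvection_induction_of_det_ne_zero (fun P => pointTransform P ∈ circuits n) P hP
    (fun _ hD => pointTransform_diagonal_mem fun i => by
      rw [det_diagonal] at hD
      exact Finset.prod_ne_zero_iff.1 hD i (Finset.mem_univ i))
    (fun t => pointTransform_transvection_mem t.hij t.c)
    (fun _ _ _ _ hA hB => by rw [map_mul]; exact mul_mem hA hB)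

lemma upperShear_mem {S : Matrix (Fin n) (Fin n) ℝ} (hS : S.IsSymm) :
    upperShear S ∈ circuits n := by
  refine hS.induction (p := fun B => upperShear B ∈ circuits n) ?_ ?_ ?_ ?_
  · rw [upperShear_zero]
    exact one_mem _
  · intro A B hA hB
    rw [upperShear_add]
    exact mul_mem hA hB
  · intro i g
    rw [← phaseX_eq_upperShear]
    exact phaseX_mem i g
  · intro i j g hij
    have h : transvection i j (1 : ℝ) * transvection i j (-1) = 1 := by
      rw [transvection_mul_transvection_same _ _ hij, add_neg_cancel, transvection_zero]
    rw [← pointTransform_mul_upperShear_mul h, ← phaseX_eq_upperShear]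
    exact mul_mem (mul_mem (pointTransform_transvection_mem hij _) (phaseX_mem i g))
      (pointTransform_transvection_mem hij _)

lemma lowerShear_mem {S : Matrix (Fin n) (Fin n) ℝ} (hS : S.IsSymm) :
    lowerShear S ∈ circuits n := by
  refine hS.induction (p := fun B => lowerShear B ∈ circuits n) ?_ ?_ ?_ ?_
  · rw [lowerShear_zero]
    exact one_mem _
  · intro A B hA hB
    rw [lowerShear_add]
    exact mul_mem hA hB
  · intro i g
    rw [← phaseP_eq_lowerShear]
    exact phaseP_mem i g
  · intro i j g hij
    have h : transvection j i (-1 : ℝ) * transvection j i 1 = 1 := by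
      rw [transvection_mul_transvection_same _ _ hij.symm, neg_add_cancel, transvection_zero]
    have e : (transvection i j 1)ᵀ * single i i g * transvection i j 1 =
        transvection j i 1 * single i i g * (transvection j i 1)ᵀ := by
      rw [transpose_transvection, transpose_transvection]
    rw [e, ← pointTransform_mul_lowerShear_mul h, ← phaseP_eq_lowerShear]
    exact mul_mem (mul_mem (pointTransform_transvection_mem hij.symm _) (phaseP_mem i g))
      (pointTransform_transvection_mem hij.symm _)

lemma fromBlocks_mem_circuits_of_isUnit_det {A B C D : Matrix (Fin n) (Fin n) ℝ}
    (h : fromBlocks A B C D ∈ symplecticGroup (Fin n) ℝ) (hA : IsUnit A.det) :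
    fromBlocks A B C D ∈ circuits n := by
  obtain ⟨hAC, -, hAD⟩ := SymplecticGroup.fromBlocks_mem_iff.1 h
  have hAB : A * Bᵀ = B * Aᵀ := by
    have hT := SymplecticGroup.transpose_mem h
    rw [fromBlocks_transpose, SymplecticGroup.fromBlocks_mem_iff, transpose_transpose,
      transpose_transpose] at hT
    exact hT.1
  rw [fromBlocks_eq_lowerShear_mul_pointTransform_mul_upperShear hA hAC hAD]
  refine mul_mem (mul_mem (lowerShear_mem (isSymm_mul_inv hA hAC)) (pointTransform_mem ?_))
    (upperShear_mem (isSymm_inv_mul hA hAB))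
  rw [det_nonsing_inv, det_transpose]
  exact hA.ringInverse.ne_zero

lemma fromBlocks_mem_circuits {A B C D : Matrix (Fin n) (Fin n) ℝ}
    (h : fromBlocks A B C D ∈ symplecticGroup (Fin n) ℝ) : fromBlocks A B C D ∈ circuits n := by
  obtain ⟨hAC, -, hAD⟩ := SymplecticGroup.fromBlocks_mem_iff.1 h
  have hker (x : Fin n → ℝ) (hAx : A *ᵥ x = 0) (hCx : C *ᵥ x = 0) : x = 0 :=
    calc x = (Aᵀ * D - Cᵀ * B)ᵀ *ᵥ x := by rw [hAD, transpose_one, one_mulVec]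
      _ = Dᵀ *ᵥ (A *ᵥ x) - Bᵀ *ᵥ (C *ᵥ x) := by
        simp [transpose_sub, transpose_mul, sub_mulVec, mulVec_mulVec]
      _ = 0 := by rw [hAx, hCx, mulVec_zero, mulVec_zero, sub_zero]
  obtain ⟨S, hS, hdet⟩ := exists_isSymm_isUnit_det_add_mul hAC hker
  have hshear : upperShear S * fromBlocks A B C D = fromBlocks (A + S * C) (B + S * D) C D := by
    simp [upperShear, fromBlocks_multiply]
  have hsheared : upperShear S * fromBlocks A B C D ∈ circuits n := by
    rw [hshear]
    exact fromBlocks_mem_circuits_of_isUnit_det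
      (hshear ▸ mul_mem (upperShear_mem_symplecticGroup hS) h) hdet
  have hsplit : fromBlocks A B C D = upperShear (-S) * (upperShear S * fromBlocks A B C D) := by
    rw [← Matrix.mul_assoc, ← upperShear_add, neg_add_cancel, upperShear_zero, Matrix.one_mul]
  rw [hsplit]
  exact mul_mem (upperShear_mem hS.neg) hsheared

end Circuits

end LinearOptics

open LinearOptics in
/-- Every symplectic `2n × 2n` real matrix is a finite (ordered) product of the
elementary one- and two-mode generator matrices: these gates generate
`Sp(2n, ℝ)`. -/
theorem symplectic_generated_by_linear_optics (n : ℕ)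
    (Υ : Matrix (Fin n ⊕ Fin n) (Fin n ⊕ Fin n) ℝ) (hΥ : IsSymplectic Υ) :
    ∃ L : List (Matrix (Fin n ⊕ Fin n) (Fin n ⊕ Fin n) ℝ),
      (∀ M ∈ L, IsGenerator M) ∧ Υ = L.prod := by
  rw [isSymplectic_iff_mem_symplecticGroup, ← fromBlocks_toBlocks Υ] at hΥ
  obtain ⟨L, hL, hprod⟩ := Submonoid.exists_list_of_mem_closure (fromBlocks_mem_circuits hΥ)
  exact ⟨L, hL, by rw [hprod, fromBlocks_toBlocks]⟩
end
end

section
/- Let n ≥ 1 and let Υ be a symplectic 2n×2n real matrix. Then there exists a finite product G of the generator matrices (squeezers S_i(a) with a ≠ 0, Fourier transforms F_i, QND interactions Q^X_{ij}(g) and Q^P_{ij}(g), phase gates P^X_i(g) and P^P_i(g), and mode swaps σ_{ij}) such that (GΥ) e_1 = e_1 and (GΥ) e_{n+1} = e_{n+1}; i.e., the first column of GΥ equals e_1 and its (n+1)-st column equals e_{n+1}. -/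
open Matrix BigOperators

noncomputable section

/-!
Every generator preserves the symplectic form `symp`, hence so does every product of
generators. Such products act transitively on nonzero vectors: a mode swap (preceded by a
Fourier transform if needed) makes `p_1` nonzero, a squeezer makes it `1`, each other mode `a`
is then emptied by `Q^P_{1a}`, `F_a`, `Q^P_{1a}`, which disturb only `x_1`, and finally a phase
gate `P^P_1` removes `x_1`. This gives a product `A` with `A Υ e_1 = e_1`. As
`symp (Υ e_1) (Υ e_{n+1}) = 1` is preserved by `A`, the vector `A Υ e_{n+1}` has `x_1 = 1`.
Conjugating the same clearing procedure by `F_1`, which exchanges `e_1` and `e_{n+1}` up to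
sign, sends it to `e_{n+1}`; as every gate of that procedure fixes `e_{n+1}`, the conjugate
fixes `e_1`.
-/

open Sum

section

variable {n : ℕ}

lemma squeezer_mulVec_apply (i : Fin n) (a : ℝ) (u : Fin n ⊕ Fin n → ℝ) (r : Fin n ⊕ Fin n) :
    (squeezer n i a *ᵥ u) r =
      if r = inl i then a⁻¹ * u (inl i) else if r = inr i then a * u (inr i) else u r := by
  split_ifs <;> subst_vars <;>
    simp [mulVec, dotProduct, squeezer, Finset.sum_ite, Finset.filter_ne', Finset.filter_eq', *]

lemma fourierGate_mulVec_apply (i : Fin n) (u : Fin n ⊕ Fin n → ℝ) (r : Fin n ⊕ Fin n) :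
    (fourierGate n i *ᵥ u) r =
      if r = inl i then u (inr i) else if r = inr i then -u (inl i) else u r := by
  split_ifs <;> subst_vars <;>
    simp [mulVec, dotProduct, fourierGate, *]

lemma qndX_mulVec_apply {i j : Fin n} (hij : i ≠ j) (g : ℝ) (u : Fin n ⊕ Fin n → ℝ)
    (r : Fin n ⊕ Fin n) :
    (qndX n i j g *ᵥ u) r =
      if r = inr j then u (inr j) + g * u (inr i)
      else if r = inl i then u (inl i) - g * u (inl j) else u r := by
  split_ifs <;> subst_vars <;>
    simp [mulVec, dotProduct, qndX, Finset.sum_ite, Finset.filter_ne', Finset.filter_eq',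
      hij.symm, *] <;> ring

lemma qndP_mulVec_apply {i j : Fin n} (hij : i ≠ j) (g : ℝ) (u : Fin n ⊕ Fin n → ℝ)
    (r : Fin n ⊕ Fin n) :
    (qndP n i j g *ᵥ u) r =
      if r = inr i then u (inr i) - g * u (inr j)
      else if r = inl j then u (inl j) + g * u (inl i) else u r := by
  split_ifs <;> subst_vars <;>
    simp [mulVec, dotProduct, qndP, Finset.sum_ite, Finset.filter_ne', Finset.filter_eq',
      hij.symm, *] <;> ring

lemma phaseX_mulVec_apply (i : Fin n) (g : ℝ) (u : Fin n ⊕ Fin n → ℝ) (r : Fin n ⊕ Fin n) :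
    (phaseX n i g *ᵥ u) r = if r = inl i then u (inl i) + g * u (inr i) else u r := by
  split_ifs <;> subst_vars <;>
    simp [mulVec, dotProduct, phaseX, Finset.sum_ite, Finset.filter_ne', Finset.filter_eq', *]
  ring

lemma phaseP_mulVec_apply (i : Fin n) (g : ℝ) (u : Fin n ⊕ Fin n → ℝ) (r : Fin n ⊕ Fin n) :
    (phaseP n i g *ᵥ u) r = if r = inr i then u (inr i) + g * u (inl i) else u r := by
  split_ifs <;> subst_vars <;>
    simp [mulVec, dotProduct, phaseP, Finset.sum_ite, Finset.filter_ne', Finset.filter_eq', *]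
  ring

lemma modeSwap_mulVec_apply (i j : Fin n) (u : Fin n ⊕ Fin n → ℝ) (r : Fin n ⊕ Fin n) :
    (modeSwap n i j *ᵥ u) r = u (Sum.map (Equiv.swap i j) (Equiv.swap i j) r) := by
  simp [mulVec, dotProduct, modeSwap]

lemma fourierGate_mulVec_single_inl (i : Fin n) :
    fourierGate n i *ᵥ Pi.single (inl i) 1 = -Pi.single (inr i) 1 := by
  ext r
  rw [fourierGate_mulVec_apply]
  split_ifs <;> simp_all

lemma fourierGate_mulVec_single_inr (i : Fin n) :
    fourierGate n i *ᵥ Pi.single (inr i) 1 = Pi.single (inl i) 1 := by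
  ext r
  rw [fourierGate_mulVec_apply]
  split_ifs <;> simp_all

lemma symp_eq_dotProduct_mulVec (u v : Fin n ⊕ Fin n → ℝ) : symp u v = u ⬝ᵥ (_root_.J n *ᵥ v) := by
  simp [symp, _root_.J, dotProduct, mulVec, Fintype.sum_sum_type, Finset.sum_sub_distrib, one_apply]
  ring

lemma IsSymplectic.symp_mulVec {Υ : Matrix (Fin n ⊕ Fin n) (Fin n ⊕ Fin n) ℝ}
    (hΥ : IsSymplectic Υ) (u v : Fin n ⊕ Fin n → ℝ) : symp (Υ *ᵥ u) (Υ *ᵥ v) = symp u v := by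
  calc symp (Υ *ᵥ u) (Υ *ᵥ v) = u ⬝ᵥ ((Υᵀ * _root_.J n * Υ) *ᵥ v) := by
        rw [symp_eq_dotProduct_mulVec, ← mulVec_mulVec, ← mulVec_mulVec, dotProduct_mulVec u,
          vecMul_transpose]
    _ = symp u v := by rw [hΥ, symp_eq_dotProduct_mulVec]

lemma symp_single_inl (z : Fin n) (v : Fin n ⊕ Fin n → ℝ) :
    symp (Pi.single (inl z) 1) v = v (inr z) := by
  simp [symp, Pi.single_apply]

def sympPreserving (n : ℕ) : Submonoid (Matrix (Fin n ⊕ Fin n) (Fin n ⊕ Fin n) ℝ) where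
  carrier := {M | ∀ u v, symp (M *ᵥ u) (M *ᵥ v) = symp u v}
  one_mem' := by simp
  mul_mem' hM hN u v := by simp only [← mulVec_mulVec, hM _ _, hN u v]

lemma IsGenerator.mem_sympPreserving {M : Matrix (Fin n ⊕ Fin n) (Fin n ⊕ Fin n) ℝ}
    (hM : IsGenerator M) : M ∈ sympPreserving n := by
  intro u v
  rw [← sub_eq_zero]
  unfold symp
  rw [← Finset.sum_sub_distrib]
  rcases hM with ⟨i, a, ha, rfl⟩ | ⟨i, rfl⟩ | ⟨i, j, g, hij, rfl⟩ | ⟨i, j, g, hij, rfl⟩ |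
    ⟨i, g, rfl⟩ | ⟨i, g, rfl⟩ | ⟨i, j, rfl⟩
  · rw [Fintype.sum_eq_single i (fun k hk => by simp [squeezer_mulVec_apply, hk])]
    simp [squeezer_mulVec_apply]
    field_simp
    ring
  · rw [Fintype.sum_eq_single i (fun k hk => by simp [fourierGate_mulVec_apply, hk])]
    simp [fourierGate_mulVec_apply]
    ring
  · rw [Fintype.sum_eq_add i j hij (fun k hk => by simp [qndX_mulVec_apply hij, hk])]
    simp [qndX_mulVec_apply hij, hij, hij.symm]
    ring
  · rw [Fintype.sum_eq_add i j hij (fun k hk => by simp [qndP_mulVec_apply hij, hk])]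
    simp [qndP_mulVec_apply hij, hij, hij.symm]
    ring
  · rw [Fintype.sum_eq_single i (fun k hk => by simp [phaseX_mulVec_apply, hk])]
    simp [phaseX_mulVec_apply]
    ring
  · rw [Fintype.sum_eq_single i (fun k hk => by simp [phaseP_mulVec_apply, hk])]
    simp [phaseP_mulVec_apply]
    ring
  · rw [Finset.sum_sub_distrib, sub_eq_zero]
    simp only [modeSwap_mulVec_apply, Sum.map_inl, Sum.map_inr]
    exact Equiv.sum_comp (Equiv.swap i j) fun k => u (inl k) * v (inr k) - u (inr k) * v (inl k)

def linearOptical (n : ℕ) : Submonoid (Matrix (Fin n ⊕ Fin n) (Fin n ⊕ Fin n) ℝ) :=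
  Submonoid.closure {M | IsGenerator M}

lemma symp_mulVec_of_mem_linearOptical {M : Matrix (Fin n ⊕ Fin n) (Fin n ⊕ Fin n) ℝ}
    (hM : M ∈ linearOptical n) (u v : Fin n ⊕ Fin n → ℝ) :
    symp (M *ᵥ u) (M *ᵥ v) = symp u v :=
  Submonoid.closure_le.2 (fun _ h => IsGenerator.mem_sympPreserving h) hM u v

lemma squeezer_mem_linearOptical (i : Fin n) {a : ℝ} (ha : a ≠ 0) :
    squeezer n i a ∈ linearOptical n :=
  Submonoid.subset_closure (Or.inl ⟨i, a, ha, rfl⟩)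

lemma fourierGate_mem_linearOptical (i : Fin n) : fourierGate n i ∈ linearOptical n :=
  Submonoid.subset_closure (Or.inr (Or.inl ⟨i, rfl⟩))

lemma qndP_mem_linearOptical {i j : Fin n} (hij : i ≠ j) (g : ℝ) :
    qndP n i j g ∈ linearOptical n :=
  Submonoid.subset_closure (Or.inr (Or.inr (Or.inr (Or.inl ⟨i, j, g, hij, rfl⟩))))

lemma phaseP_mem_linearOptical (i : Fin n) (g : ℝ) : phaseP n i g ∈ linearOptical n :=
  Submonoid.subset_closure (Or.inr (Or.inr (Or.inr (Or.inr (Or.inr (Or.inl ⟨i, g, rfl⟩))))))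

lemma modeSwap_mem_linearOptical (i j : Fin n) : modeSwap n i j ∈ linearOptical n :=
  Submonoid.subset_closure (Or.inr (Or.inr (Or.inr (Or.inr (Or.inr (Or.inr ⟨i, j, rfl⟩))))))

lemma exists_mem_linearOptical_clear_mode {z a : Fin n} (haz : a ≠ z) {u : Fin n ⊕ Fin n → ℝ}
    (hu : u (inl z) = 1) :
    ∃ M ∈ linearOptical n, M *ᵥ Pi.single (inr z) 1 = Pi.single (inr z) 1 ∧
      (M *ᵥ u) (inl a) = 0 ∧ (M *ᵥ u) (inr a) = 0 ∧
      ∀ r, r ≠ inr z → r ≠ inl a → r ≠ inr a → (M *ᵥ u) r = u r := by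
  refine ⟨qndP n z a (-u (inr a)) * fourierGate n a * qndP n z a (-u (inl a)),
    mul_mem (mul_mem (qndP_mem_linearOptical haz.symm _) (fourierGate_mem_linearOptical a))
      (qndP_mem_linearOptical haz.symm _), ?_, ?_, ?_, ?_⟩
  · ext r
    simp only [← mulVec_mulVec, qndP_mulVec_apply haz.symm, fourierGate_mulVec_apply]
    split_ifs <;> simp_all
  · simp [← mulVec_mulVec, qndP_mulVec_apply haz.symm, fourierGate_mulVec_apply, haz, haz.symm, hu]
  · simp [← mulVec_mulVec, qndP_mulVec_apply haz.symm, fourierGate_mulVec_apply, haz, hu]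
  · intro r h1 h2 h3
    simp [← mulVec_mulVec, qndP_mulVec_apply haz.symm, fourierGate_mulVec_apply, h1, h2, h3]

lemma exists_mem_linearOptical_clear_modes (z : Fin n) (s : Finset (Fin n))
    {u : Fin n ⊕ Fin n → ℝ} (hu : u (inl z) = 1)
    (hs : ∀ k, k ≠ z → k ∉ s → u (inl k) = 0 ∧ u (inr k) = 0) :
    ∃ M ∈ linearOptical n, M *ᵥ u = Pi.single (inl z) 1 ∧
      M *ᵥ Pi.single (inr z) 1 = Pi.single (inr z) 1 := by
  classical
  induction s using Finset.induction_on generalizing u with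
  | empty =>
    refine ⟨phaseP n z (-u (inr z)), phaseP_mem_linearOptical z _, ?_, ?_⟩ <;> ext r <;>
      rw [phaseP_mulVec_apply]
    · rcases r with k | k <;> by_cases hk : k = z <;> simp_all
    · split_ifs <;> simp_all
  | insert a s ha ih =>
    by_cases haz : a = z
    · subst haz
      exact ih hu fun k hkz hks => hs k hkz (by simp [hkz, hks])
    obtain ⟨A, hA, hAe, hAa, hAa', hAu⟩ := exists_mem_linearOptical_clear_mode haz hu
    have hAs : ∀ k, k ≠ z → k ∉ s → (A *ᵥ u) (inl k) = 0 ∧ (A *ᵥ u) (inr k) = 0 := by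
      intro k hkz hks
      by_cases hka : k = a
      · subst hka
        exact ⟨hAa, hAa'⟩
      rw [hAu (inl k) (by simp) (by simpa using hka) (by simp),
        hAu (inr k) (by simpa using hkz) (by simp) (by simpa using hka)]
      exact hs k hkz (by simp [hka, hks])
    obtain ⟨B, hB, hBu, hBe⟩ := ih (by simpa [hu, Ne.symm haz] using hAu (inl z)) hAs
    exact ⟨B * A, mul_mem hB hA, by rw [← mulVec_mulVec, hBu], by rw [← mulVec_mulVec, hAe, hBe]⟩

lemma exists_mem_linearOptical_mulVec_inl_ne_zero (z : Fin n) {u : Fin n ⊕ Fin n → ℝ}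
    (hu : u ≠ 0) : ∃ M ∈ linearOptical n, (M *ᵥ u) (inl z) ≠ 0 := by
  obtain ⟨r, hr⟩ := Function.ne_iff.1 hu
  rcases r with i | i
  · exact ⟨modeSwap n z i, modeSwap_mem_linearOptical z i,
      by simpa [modeSwap_mulVec_apply] using hr⟩
  · refine ⟨modeSwap n z i * fourierGate n i,
      mul_mem (modeSwap_mem_linearOptical z i) (fourierGate_mem_linearOptical i), ?_⟩
    simpa [← mulVec_mulVec, modeSwap_mulVec_apply, fourierGate_mulVec_apply] using hr

lemma exists_mem_linearOptical_mulVec_eq_single_inl (z : Fin n) {u : Fin n ⊕ Fin n → ℝ}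
    (hu : u ≠ 0) : ∃ M ∈ linearOptical n, M *ᵥ u = Pi.single (inl z) 1 := by
  obtain ⟨A, hA, hAu⟩ := exists_mem_linearOptical_mulVec_inl_ne_zero z hu
  set S := squeezer n z ((A *ᵥ u) (inl z))
  have hSAu : (S *ᵥ A *ᵥ u) (inl z) = 1 := by simp [S, squeezer_mulVec_apply, hAu]
  obtain ⟨B, hB, hBu, -⟩ := exists_mem_linearOptical_clear_modes z Finset.univ hSAu (by simp)
  refine ⟨B * S * A, mul_mem (mul_mem hB (squeezer_mem_linearOptical z hAu)) hA, ?_⟩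
  rw [← mulVec_mulVec, ← mulVec_mulVec, hBu]

lemma exists_mem_linearOptical_mulVec_eq_single_inr (z : Fin n) {v : Fin n ⊕ Fin n → ℝ}
    (hv : v (inr z) = 1) :
    ∃ M ∈ linearOptical n, M *ᵥ v = Pi.single (inr z) 1 ∧
      M *ᵥ Pi.single (inl z) 1 = Pi.single (inl z) 1 := by
  have hF := fourierGate_mem_linearOptical z
  have hFv : (fourierGate n z *ᵥ v) (inl z) = 1 := by simp [fourierGate_mulVec_apply, hv]
  obtain ⟨A, hA, hAv, hAe⟩ := exists_mem_linearOptical_clear_modes z Finset.univ hFv (by simp)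
  refine ⟨fourierGate n z ^ 3 * A * fourierGate n z, mul_mem (mul_mem (pow_mem hF 3) hA) hF,
    ?_, ?_⟩ <;>
    simp only [pow_three, ← mulVec_mulVec, hAv, hAe, fourierGate_mulVec_single_inl,
      fourierGate_mulVec_single_inr, mulVec_neg, neg_neg]

end

/-- One round of symplectic Gaussian elimination: for any symplectic `Υ` there is
a finite product `G` of generator matrices such that `GΥ` fixes the standard
basis vectors `e_1` and `e_{n+1}`, i.e. the first column of `GΥ` is `e_1` and its
`(n+1)`-st column is `e_{n+1}`. -/
theorem gaussian_elimination_round (n : ℕ) (hn : 1 ≤ n)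
    (Υ : Matrix (Fin n ⊕ Fin n) (Fin n ⊕ Fin n) ℝ) (hΥ : IsSymplectic Υ) :
    ∃ L : List (Matrix (Fin n ⊕ Fin n) (Fin n ⊕ Fin n) ℝ),
      (∀ M ∈ L, IsGenerator M) ∧
      (L.prod * Υ).mulVec (Pi.single (Sum.inl (⟨0, hn⟩ : Fin n)) 1) =
        Pi.single (Sum.inl (⟨0, hn⟩ : Fin n)) 1 ∧
      (L.prod * Υ).mulVec (Pi.single (Sum.inr (⟨0, hn⟩ : Fin n)) 1) =
        Pi.single (Sum.inr (⟨0, hn⟩ : Fin n)) 1 := by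
  set z : Fin n := ⟨0, hn⟩
  have hΥz : symp (Υ *ᵥ Pi.single (inl z) 1) (Υ *ᵥ Pi.single (inr z) 1) = 1 := by
    rw [hΥ.symp_mulVec, symp_single_inl, Pi.single_eq_same]
  have hΥp : Υ *ᵥ Pi.single (inl z) 1 ≠ 0 := fun h => by simp [h, symp] at hΥz
  obtain ⟨A, hA, hAp⟩ := exists_mem_linearOptical_mulVec_eq_single_inl z hΥp
  have hAx : (A *ᵥ Υ *ᵥ Pi.single (inr z) 1) (inr z) = 1 := by
    rw [← symp_single_inl z (A *ᵥ _), ← hAp, symp_mulVec_of_mem_linearOptical hA, hΥz]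
  obtain ⟨B, hB, hBx, hBp⟩ := exists_mem_linearOptical_mulVec_eq_single_inr z hAx
  obtain ⟨L, hL, hLBA⟩ := Submonoid.exists_list_of_mem_closure (mul_mem hB hA)
  refine ⟨L, hL, ?_, ?_⟩ <;> rw [← mulVec_mulVec, hLBA, ← mulVec_mulVec]
  · rw [hAp, hBp]
  · exact hBx
end
end
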